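/- Every continuous solution ξ : [0,1] → [0,1] of ξ ∘ f = f ∘ ξ, where f is the tent map, is linear on some nondegenerate subinterval of [0,1]. -/

import Mathlib

/-!
Iterating the semiconjugacy, `tent^[n+1] (ξ (k / 2^n)) = ξ 0`, and `ξ 0` is a fixed point of the
tent map, so `ξ 0 ∈ {0, 2/3}`. Every branch of `tent^[n+1]` is `x ↦ ±2^(n+1) x + 2j`, hence
`ξ (k / 2^n) ∈ ℤ / (3 · 2^(n+1))` and the slopes `2^n |ξ ((k+1)/2^n) - ξ (k/2^n)|` of `ξ` on
dyadic intervals lie in `ℕ / 6`.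

These slopes are also bounded. If `ξ` took two consecutive values `j / 2^n`, `(j+1) / 2^n` at
points `s, t` closer than `δ / 2^n`, then `ξ (tent^[n] s) = tent^[n] (j / 2^n)` and
`ξ (tent^[n] t)` would be `0` and `1`, although `tent^[n]` is `2^n`-Lipschitz and `δ` is a modulus
of uniform continuity of `ξ` for `ε = 1`. So `ξ` oscillates by less than `2 / 2^n` at scale
`δ / 2^n`.

Hence some dyadic interval carries the maximal slope `S`. By density of the dyadic points `ξ` is
`S`-Lipschitz, and a function that is `S`-Lipschitz and increases by `S` times the length over an
interval is affine there.
-/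

noncomputable def tent (x : ℝ) : ℝ := 1 - |2 * x - 1|

open Set Filter Topology

lemma iterate_comm_of_mapsTo {α : Type*} {f g : α → α} {s : Set α} (hf : MapsTo f s s)
    (h : ∀ x ∈ s, g (f x) = f (g x)) (n : ℕ) : ∀ x ∈ s, g (f^[n] x) = f^[n] (g x) := by
  induction n with
  | zero => simp
  | succ n ih =>
    intro x hx
    rw [Function.iterate_succ_apply, Function.iterate_succ_apply, ih _ (hf hx), h x hx]

lemma dist_le_mul_of_forall_dist_step_le (g : ℝ → ℝ) (a h ε : ℝ) (N : ℕ)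
    (hstep : ∀ i < N, dist (g (a + i * h)) (g (a + (i + 1) * h)) ≤ ε) :
    dist (g a) (g (a + N * h)) ≤ N * ε := by
  simpa using dist_le_range_sum_of_dist_le (f := fun i : ℕ => g (a + i * h)) (d := fun _ => ε) N
    fun hi => by simpa using hstep _ hi

lemma exists_forall_le_of_mul_eq_natCast {ι : Type*} [Nonempty ι] {x : ι → ℝ} {c C : ℝ}
    (hc : 0 < c) (hx : ∀ i, ∃ m : ℕ, c * x i = m) (hC : ∀ i, x i ≤ C) :
    ∃ i, ∀ j, x j ≤ x i := by
  have hfin : (range x).Finite := by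
    refine ((finite_Iic ⌊c * C⌋₊).image fun m : ℕ => (m : ℝ) / c).subset ?_
    rintro _ ⟨i, rfl⟩
    obtain ⟨m, hm⟩ := hx i
    refine ⟨m, Nat.le_floor ?_, by simp only; rw [← hm]; field_simp⟩
    rw [← hm]; exact mul_le_mul_of_nonneg_left (hC i) hc.le
  obtain ⟨_, ⟨i, rfl⟩, hi⟩ := exists_max_image _ id hfin (range_nonempty x)
  exact ⟨i, fun j => hi _ ⟨j, rfl⟩⟩

lemma exists_affine_of_dist_le_of_dist_eq {f : ℝ → ℝ} {a b S : ℝ} (hab : a ≤ b)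
    (hlip : ∀ x ∈ Icc a b, ∀ y ∈ Icc a b, dist (f x) (f y) ≤ S * dist x y)
    (heq : dist (f a) (f b) = S * dist a b) :
    ∃ c d : ℝ, ∀ x ∈ Icc a b, f x = c * x + d := by
  have ha : a ∈ Icc a b := left_mem_Icc.2 hab
  have hb : b ∈ Icc a b := right_mem_Icc.2 hab
  have hleft : ∀ x ∈ Icc a b, |f a - f x| ≤ S * (x - a) := fun x hx => by
    simpa [Real.dist_eq, abs_of_nonpos (sub_nonpos.2 hx.1)] using hlip a ha x hx
  have hright : ∀ x ∈ Icc a b, |f x - f b| ≤ S * (b - x) := fun x hx => by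
    simpa [Real.dist_eq, abs_of_nonpos (sub_nonpos.2 hx.2)] using hlip x hx b hb
  rw [Real.dist_eq, Real.dist_eq, abs_of_nonpos (sub_nonpos.2 hab)] at heq
  rcases abs_choice (f a - f b) with hsign | hsign
  · refine ⟨-S, f a + S * a, fun x hx => ?_⟩
    linarith [abs_le.1 (hleft x hx), abs_le.1 (hright x hx)]
  · refine ⟨S, f a - S * a, fun x hx => ?_⟩
    linarith [abs_le.1 (hleft x hx), abs_le.1 (hright x hx)]

lemma natCast_div_two_pow_mem_Icc {n k : ℕ} (hk : k ≤ 2 ^ n) : (k : ℝ) / 2 ^ n ∈ Icc (0 : ℝ) 1 :=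
  ⟨by positivity, div_le_one_of_le₀ (by exact_mod_cast hk) (by positivity)⟩

lemma tent_eq_or (x : ℝ) : tent x = 2 * x ∨ tent x = 2 - 2 * x := by
  unfold tent
  rcases abs_choice (2 * x - 1) with h | h <;> rw [h]
  · right; ring
  · left; ring

lemma tent_mapsTo : MapsTo tent (Icc 0 1) (Icc 0 1) := by
  intro x ⟨h0, h1⟩
  rcases tent_eq_or x with h | h <;> rw [h] <;> constructor <;>
    unfold tent at h <;> linarith [abs_nonneg (2 * x - 1), le_abs_self (2 * x - 1)]

lemma lipschitzWith_tent : LipschitzWith 2 tent := by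
  refine LipschitzWith.of_dist_le_mul fun x y => ?_
  simp only [Real.dist_eq, tent, NNReal.coe_ofNat]
  calc |1 - |2 * x - 1| - (1 - |2 * y - 1|)| = |(|2 * y - 1| - |2 * x - 1|)| := by ring_nf
    _ ≤ |(2 * y - 1) - (2 * x - 1)| := abs_abs_sub_abs_le_abs_sub _ _
    _ = 2 * |x - y| := by rw [← abs_two, ← abs_mul, abs_sub_comm]; ring_nf

lemma exists_int_tent_iterate_eq (n : ℕ) (x : ℝ) :
    ∃ j : ℤ, tent^[n] x = 2 ^ n * x + 2 * j ∨ tent^[n] x = 2 * j - 2 ^ n * x := by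
  induction n with
  | zero => exact ⟨0, Or.inl (by simp)⟩
  | succ n ih =>
    obtain ⟨j, hj⟩ := ih
    rw [Function.iterate_succ_apply']
    rcases tent_eq_or (tent^[n] x) with h | h <;> rw [h] <;> rcases hj with hj | hj <;> rw [hj]
    · exact ⟨2 * j, Or.inl (by push_cast; ring)⟩
    · exact ⟨2 * j, Or.inr (by push_cast; ring)⟩
    · exact ⟨1 - 2 * j, Or.inr (by push_cast; ring)⟩
    · exact ⟨1 - 2 * j, Or.inl (by push_cast; ring)⟩

lemma exists_int_tent_iterate_int_div (n : ℕ) (j : ℤ) :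
    ∃ z : ℤ, tent^[n] (j / 2 ^ n) = z ∧ z % 2 = j % 2 := by
  obtain ⟨i, hi | hi⟩ := exists_int_tent_iterate_eq n (j / 2 ^ n) <;>
    rw [mul_div_cancel₀ _ (by positivity)] at hi
  · exact ⟨j + 2 * i, by rw [hi]; push_cast; ring, by omega⟩
  · exact ⟨2 * i - j, by rw [hi]; push_cast; ring, by omega⟩

lemma abs_sub_tent_iterate_int_div_eq_one (n : ℕ) (j : ℤ) (hj : (j : ℝ) / 2 ^ n ∈ Icc (0 : ℝ) 1)
    (hj' : ((j + 1 : ℤ) : ℝ) / 2 ^ n ∈ Icc (0 : ℝ) 1) :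
    |tent^[n] ((j + 1 : ℤ) / 2 ^ n) - tent^[n] (j / 2 ^ n)| = 1 := by
  obtain ⟨z, hz, hzj⟩ := exists_int_tent_iterate_int_div n j
  obtain ⟨z', hz', hzj'⟩ := exists_int_tent_iterate_int_div n (j + 1)
  have hzI := tent_mapsTo.iterate n hj
  have hzI' := tent_mapsTo.iterate n hj'
  rw [hz, mem_Icc] at hzI
  rw [hz', mem_Icc] at hzI'
  obtain ⟨h0, h1⟩ := hzI
  obtain ⟨h0', h1'⟩ := hzI'
  norm_cast at h0 h1 h0' h1'
  rw [hz, hz', ← Int.cast_sub, ← Int.cast_abs, Int.cast_eq_one, abs_eq zero_le_one]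
  omega

lemma tent_iterate_succ_natCast_div {n k : ℕ} (hk : k ≤ 2 ^ n) : tent^[n + 1] (k / 2 ^ n) = 0 := by
  obtain ⟨z, hz, -⟩ := exists_int_tent_iterate_int_div n k
  have hzI := tent_mapsTo.iterate n (by simpa using natCast_div_two_pow_mem_Icc hk)
  rw [Int.cast_natCast] at hz
  rw [hz, mem_Icc] at hzI
  obtain ⟨h0, h1⟩ := hzI
  norm_cast at h0 h1
  rw [Function.iterate_succ_apply', hz]
  obtain rfl | rfl : z = 0 ∨ z = 1 := by omega
  all_goals norm_num [tent]

lemma exists_int_three_mul_of_tent_eq_self {p : ℝ} (h : tent p = p) : ∃ z : ℤ, 3 * p = z := by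
  rcases tent_eq_or p with hp | hp <;> rw [hp] at h
  · exact ⟨0, by push_cast; linarith⟩
  · exact ⟨2, by push_cast; linarith⟩

lemma exists_int_mul_two_pow_mul_of_tent_iterate {c : ℤ} {n : ℕ} {x : ℝ}
    (h : ∃ z : ℤ, c * tent^[n] x = z) : ∃ z : ℤ, c * 2 ^ n * x = z := by
  obtain ⟨z, hz⟩ := h
  obtain ⟨j, hj | hj⟩ := exists_int_tent_iterate_eq n x <;> rw [hj] at hz
  · exact ⟨z - 2 * c * j, by push_cast; linarith⟩
  · exact ⟨2 * c * j - z, by push_cast; linarith⟩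

noncomputable def dyadicSlope (ξ : ℝ → ℝ) (n k : ℕ) : ℝ :=
  2 ^ n * dist (ξ (k / 2 ^ n)) (ξ ((k + 1) / 2 ^ n))

lemma dist_dyadic_le_of_forall_dyadicSlope_le {ξ : ℝ → ℝ} {S : ℝ}
    (hS : ∀ n k, k < 2 ^ n → dyadicSlope ξ n k ≤ S) {n k l : ℕ} (hkl : k ≤ l) (hl : l ≤ 2 ^ n) :
    dist (ξ (k / 2 ^ n)) (ξ (l / 2 ^ n)) ≤ S * dist ((k : ℝ) / 2 ^ n) (l / 2 ^ n) := by
  obtain ⟨N, rfl⟩ := Nat.exists_eq_add_of_le hkl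
  have hgrid : ∀ i : ℕ, (k : ℝ) / 2 ^ n + i * (1 / 2 ^ n) = ((k + i : ℕ) : ℝ) / 2 ^ n := fun i => by
    push_cast; ring
  have hsteps := dist_le_mul_of_forall_dist_step_le ξ (k / 2 ^ n) (1 / 2 ^ n) (S / 2 ^ n) N
    fun i hi => by
      rw [hgrid, show ((i : ℝ) + 1) = (i + 1 : ℕ) by push_cast; ring, hgrid,
        le_div_iff₀' (by positivity)]
      simpa [dyadicSlope, ← add_assoc] using hS n (k + i) (by omega)
  rw [hgrid] at hsteps
  refine hsteps.trans_eq ?_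
  rw [Real.dist_eq, ← sub_div, abs_div, abs_of_pos (by positivity : (0 : ℝ) < 2 ^ n)]
  push_cast
  rw [show (k : ℝ) - (k + N) = -N by ring, abs_neg, Nat.abs_cast]
  ring

lemma dist_le_of_forall_dyadicSlope_le {ξ : ℝ → ℝ} {S : ℝ} (hcont : ContinuousOn ξ (Icc 0 1))
    (hS : ∀ n k, k < 2 ^ n → dyadicSlope ξ n k ≤ S) {x y : ℝ} (hx : x ∈ Icc (0 : ℝ) 1)
    (hy : y ∈ Icc (0 : ℝ) 1) : dist (ξ x) (ξ y) ≤ S * dist x y := by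
  wlog hxy : x ≤ y generalizing x y
  · rw [dist_comm, dist_comm x]; exact this hy hx (le_of_not_ge hxy)
  have hfloor : ∀ z ∈ Icc (0 : ℝ) 1, ∀ m : ℕ, ⌊z * 2 ^ m⌋₊ ≤ 2 ^ m := fun z hz m =>
    Nat.floor_le_of_le (by simpa using mul_le_of_le_one_left (by positivity : (0 : ℝ) ≤ 2 ^ m) hz.2)
  have happrox : ∀ z ∈ Icc (0 : ℝ) 1,
      Tendsto (fun m : ℕ => (⌊z * 2 ^ m⌋₊ : ℝ) / 2 ^ m) atTop (𝓝 z) := fun z hz =>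
    (tendsto_nat_floor_mul_div_atTop hz.1).comp (tendsto_pow_atTop_atTop_of_one_lt one_lt_two)
  have hcomp : ∀ z ∈ Icc (0 : ℝ) 1,
      Tendsto (fun m : ℕ => ξ (⌊z * 2 ^ m⌋₊ / 2 ^ m)) atTop (𝓝 (ξ z)) := fun z hz =>
    (hcont z hz).tendsto.comp (tendsto_nhdsWithin_iff.2
      ⟨happrox z hz, Eventually.of_forall fun m => natCast_div_two_pow_mem_Icc (hfloor z hz m)⟩)
  exact le_of_tendsto_of_tendsto' ((hcomp x hx).dist (hcomp y hy))
    (((happrox x hx).dist (happrox y hy)).const_mul S) fun m =>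
      dist_dyadic_le_of_forall_dyadicSlope_le hS (Nat.floor_le_floor (by gcongr)) (hfloor y hy m)

section Semiconj

variable {ξ : ℝ → ℝ} (hcomm : ∀ x ∈ Icc (0 : ℝ) 1, ξ (tent x) = tent (ξ x))
include hcomm

lemma exists_int_eq_three_mul_two_pow_succ_mul {n k : ℕ} (hk : k ≤ 2 ^ n) :
    ∃ z : ℤ, 3 * 2 ^ (n + 1) * ξ (k / 2 ^ n) = z := by
  have hfix : tent (ξ 0) = ξ 0 := by
    simpa [tent] using (hcomm 0 (left_mem_Icc.2 zero_le_one)).symm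
  have h := iterate_comm_of_mapsTo tent_mapsTo hcomm (n + 1) _ (natCast_div_two_pow_mem_Icc hk)
  rw [tent_iterate_succ_natCast_div hk] at h
  simpa using exists_int_mul_two_pow_mul_of_tent_iterate (c := 3)
    (by simpa [← h] using exists_int_three_mul_of_tent_eq_self hfix)

lemma exists_natCast_eq_six_mul_dyadicSlope {n k : ℕ} (hk : k < 2 ^ n) :
    ∃ m : ℕ, 6 * dyadicSlope ξ n k = m := by
  obtain ⟨z, hz⟩ := exists_int_eq_three_mul_two_pow_succ_mul hcomm hk.le
  obtain ⟨z', hz'⟩ := exists_int_eq_three_mul_two_pow_succ_mul hcomm (Nat.succ_le_of_lt hk)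
  refine ⟨(z - z').natAbs, ?_⟩
  rw [Nat.cast_natAbs, Int.cast_abs, Int.cast_sub, ← hz, ← hz', dyadicSlope, Real.dist_eq,
    ← mul_sub, abs_mul, abs_of_pos (by positivity : (0 : ℝ) < 3 * 2 ^ (n + 1)), Nat.cast_succ]
  ring

variable (hcont : ContinuousOn ξ (Icc 0 1)) (hmaps : MapsTo ξ (Icc 0 1) (Icc 0 1)) {δ : ℝ}
  (hδ : ∀ x ∈ Icc (0 : ℝ) 1, ∀ y ∈ Icc (0 : ℝ) 1, dist x y < δ → dist (ξ x) (ξ y) < 1)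
include hcont hmaps hδ

lemma dist_lt_two_div_two_pow {n : ℕ} {x y : ℝ} (hx : x ∈ Icc (0 : ℝ) 1) (hy : y ∈ Icc (0 : ℝ) 1)
    (hxy : dist x y < δ / 2 ^ n) : dist (ξ x) (ξ y) < 2 / 2 ^ n := by
  wlog hle : ξ x ≤ ξ y generalizing x y
  · rw [dist_comm] at hxy ⊢
    exact this hy hx hxy (le_of_not_ge hle)
  by_contra! hfar
  rw [Real.dist_eq, abs_sub_comm, abs_of_nonneg (sub_nonneg.2 hle)] at hfar
  set j : ℤ := ⌈2 ^ n * ξ x⌉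
  have h2n : (0 : ℝ) < 2 ^ n := by positivity
  have hj : ξ x ≤ j / 2 ^ n := by rw [le_div_iff₀ h2n, mul_comm]; exact Int.le_ceil _
  have hj' : ((j + 1 : ℤ) : ℝ) / 2 ^ n ≤ ξ y := by
    have := Int.ceil_lt_add_one (2 ^ n * ξ x)
    rw [div_le_iff₀ h2n]; push_cast
    nlinarith [(div_le_iff₀ h2n).1 (show 2 / 2 ^ n ≤ ξ y - ξ x from hfar)]
  have hsub : uIcc x y ⊆ Icc 0 1 := uIcc_subset_Icc hx hy
  have hivt := intermediate_value_uIcc (hcont.mono hsub)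
  have hjj : (j : ℝ) / 2 ^ n ≤ ((j + 1 : ℤ) : ℝ) / 2 ^ n := by gcongr; simp
  obtain ⟨s, hs, hξs⟩ := hivt (mem_uIcc_of_le hj (hjj.trans hj'))
  obtain ⟨t, ht, hξt⟩ := hivt (mem_uIcc_of_le (hj.trans hjj) hj')
  have hst : dist (tent^[n] s) (tent^[n] t) < δ := calc
    _ ≤ 2 ^ n * dist s t := by simpa using (lipschitzWith_tent.iterate n).dist_le_mul s t
    _ ≤ 2 ^ n * dist x y := by gcongr; exact Real.dist_le_of_mem_uIcc hs ht
    _ < δ := by rwa [lt_div_iff₀' h2n] at hxy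
  have hone := hδ _ (tent_mapsTo.iterate n (hsub hs)) _ (tent_mapsTo.iterate n (hsub ht)) hst
  rw [iterate_comm_of_mapsTo tent_mapsTo hcomm n _ (hsub hs),
    iterate_comm_of_mapsTo tent_mapsTo hcomm n _ (hsub ht), hξs, hξt, dist_comm, Real.dist_eq,
    abs_sub_tent_iterate_int_div_eq_one n j (hξs ▸ hmaps (hsub hs)) (hξt ▸ hmaps (hsub ht))] at hone
  exact lt_irrefl _ hone

lemma exists_forall_dyadicSlope_le (hδ₀ : 0 < δ) :
    ∃ C, ∀ n k, k < 2 ^ n → dyadicSlope ξ n k ≤ C := by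
  obtain ⟨p, hp⟩ := exists_pow_lt_of_lt_one hδ₀ (by norm_num : (1 / 2 : ℝ) < 1)
  refine ⟨2 ^ (p + 1), fun n k hk => ?_⟩
  set a : ℝ := k / 2 ^ n
  set h : ℝ := 1 / 2 ^ (n + p)
  have hend : a + (2 ^ p : ℕ) * h = (k + 1) / 2 ^ n := by
    simp only [a, h]; push_cast; field_simp; ring
  have hmem : ∀ i : ℕ, i ≤ 2 ^ p → a + i * h ∈ Icc (0 : ℝ) 1 := fun i hi => by
    refine ⟨by positivity, ?_⟩
    calc a + i * h ≤ a + (2 ^ p : ℕ) * h := by gcongr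
      _ ≤ 1 := by
        rw [hend]
        exact div_le_one_of_le₀ (by exact_mod_cast Nat.succ_le_of_lt hk) (by positivity)
  have hdist : ∀ i : ℕ, dist (a + i * h) (a + (i + 1) * h) < δ / 2 ^ n := fun i => by
    rw [Real.dist_eq, show a + i * h - (a + (i + 1) * h) = -h by ring, abs_neg,
      abs_of_pos (by positivity)]
    calc h = (1 / 2) ^ p / 2 ^ n := by simp only [h, pow_add, one_div_pow, div_div, mul_comm]
      _ < δ / 2 ^ n := by gcongr
  have hsteps := dist_le_mul_of_forall_dist_step_le ξ a h (2 / 2 ^ n) (2 ^ p) fun i hi =>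
    (dist_lt_two_div_two_pow hcomm hcont hmaps hδ (hmem i hi.le)
      (by exact_mod_cast hmem (i + 1) hi) (hdist i)).le
  rw [hend] at hsteps
  calc dyadicSlope ξ n k ≤ 2 ^ n * ((2 ^ p : ℕ) * (2 / 2 ^ n)) := by
        unfold dyadicSlope; gcongr
    _ = 2 ^ (p + 1) := by push_cast; field_simp; ring

end Semiconj

theorem exists_interval_of_linearity (ξ : ℝ → ℝ)
    (hcont : ContinuousOn ξ (Set.Icc 0 1))
    (hmaps : Set.MapsTo ξ (Set.Icc 0 1) (Set.Icc 0 1))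
    (hcomm : ∀ x ∈ Set.Icc (0:ℝ) 1, ξ (tent x) = tent (ξ x)) :
    ∃ a b : ℝ, 0 ≤ a ∧ a < b ∧ b ≤ 1 ∧
      ∃ c d : ℝ, ∀ x ∈ Set.Icc a b, ξ x = c * x + d := by
  obtain ⟨δ, hδ₀, hδ⟩ := Metric.uniformContinuousOn_iff.1
    (isCompact_Icc.uniformContinuousOn_of_continuous hcont) 1 one_pos
  obtain ⟨C, hC⟩ := exists_forall_dyadicSlope_le hcomm hcont hmaps hδ hδ₀
  obtain ⟨⟨n, k, hk⟩, hmax⟩ := exists_forall_le_of_mul_eq_natCast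
    (x := fun c : Σ n : ℕ, Fin (2 ^ n) => dyadicSlope ξ c.1 c.2) (by norm_num : (0 : ℝ) < 6)
    (fun c => exists_natCast_eq_six_mul_dyadicSlope hcomm c.2.2) (fun c => hC _ _ c.2.2)
  have hlip : ∀ x ∈ Icc (0 : ℝ) 1, ∀ y ∈ Icc (0 : ℝ) 1,
      dist (ξ x) (ξ y) ≤ dyadicSlope ξ n k * dist x y := fun x hx y hy =>
    dist_le_of_forall_dyadicSlope_le hcont (fun m j hj => hmax ⟨m, j, hj⟩) hx hy
  have ha := natCast_div_two_pow_mem_Icc hk.le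
  have hb := natCast_div_two_pow_mem_Icc (Nat.succ_le_of_lt hk)
  push_cast at hb
  have hab : (k : ℝ) / 2 ^ n < (k + 1) / 2 ^ n := by gcongr; linarith
  refine ⟨k / 2 ^ n, (k + 1) / 2 ^ n, ha.1, hab, hb.2,
    exists_affine_of_dist_le_of_dist_eq hab.le (fun x hx y hy =>
      hlip x (Icc_subset_Icc ha.1 hb.2 hx) y (Icc_subset_Icc ha.1 hb.2 hy)) ?_⟩
  rw [dyadicSlope, Real.dist_eq ((k : ℝ) / 2 ^ n), ← sub_div, show (k : ℝ) - (k + 1) = -1 by ring,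
    abs_div, abs_neg, abs_one, abs_of_pos (by positivity : (0 : ℝ) < 2 ^ n)]
  field_simp
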